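/- arXiv:2004.09613 — 2 statements merged into one kernel-verified Lean document; each statement's English description precedes it below -/
import Mathlib

section
/- (Variable drift, fixed-target upper bound.) Let k' > 0 be a threshold, let (X_t)_{t∈ℕ} be integrable real-valued random variables adapted to a filtration (F_t) with X_0 = x_0 ≥ k' deterministic, and let T = inf{t : X_t < k'}. Suppose that X_t ≥ 0 for all t ≤ T, and that there is a monotonically increasing function h : [k', ∞) → (0, ∞) such that for all t, on the event {t < T}, X_t − E[X_{t+1} | F_t] ≥ h(X_t) almost surely. Then E[T] ≤ k'/h(k') + ∫_{k'}^{x_0} 1/h(z) dz. -/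
/-!
The potential `g x = ∫ z in 0..x, (h (max z k'))⁻¹` turns variable drift into additive drift.
Its integrand is antitone, so `g x - g y ≥ (x - y) / h x` whenever `x ≥ k'`; by the pull-out
property, `E[(g X_t - g X_{t+1}) 1_{t < T}] ≥ P(t < T)`. Summing over `t < n`, the left side
telescopes to `E[g X_0 - g X_{min n T}] ≤ g x0`, because `g ≥ 0` on `[0, ∞)` and `X` is
nonnegative up to `T`. Hence `E[T] = ∑ₜ P(t < T) ≤ g x0 = k'/h(k') + ∫_{k'}^{x0} 1/h`.
-/

open MeasureTheory

/-- First time at which the process `X` takes a value strictly below `k'`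
(`⊤` if this never happens). -/
noncomputable def hitTimeLT {Ω : Type*} (X : ℕ → Ω → ℝ) (k' : ℝ) (ω : Ω) : ℕ∞ :=
  sInf {r : ℕ∞ | ∃ t : ℕ, r = (t : ℕ∞) ∧ X t ω < k'}

open Finset
open scoped ENNReal

section HitTime

variable {Ω : Type*} {X : ℕ → Ω → ℝ} {k' : ℝ}

lemma le_hitTimeLT_iff {ω : Ω} {j : ℕ} :
    (j : ℕ∞) ≤ hitTimeLT X k' ω ↔ ∀ t < j, k' ≤ X t ω := by
  simp only [hitTimeLT, le_sInf_iff, Set.mem_ofPred_eq, forall_exists_index, and_imp]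
  refine ⟨fun H t ht => not_lt.1 fun hX => ?_, fun H r t hr hX => ?_⟩
  · exact absurd (H t t rfl hX) (by exact_mod_cast ht.not_ge)
  · exact hr ▸ Nat.cast_le.2 (not_lt.1 fun ht => (H t ht).not_gt hX)

lemma lt_hitTimeLT_iff {ω : Ω} {j : ℕ} :
    (j : ℕ∞) < hitTimeLT X k' ω ↔ ∀ t ≤ j, k' ≤ X t ω := by
  rw [← ENat.add_one_le_iff (ENat.natCast_ne_top j), ← Nat.cast_succ, le_hitTimeLT_iff]
  simp only [Nat.lt_succ_iff]

lemma measurableSet_lt_hitTimeLT {m0 : MeasurableSpace Ω} {ℱ : Filtration ℕ m0}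
    (hadapt : Adapted ℱ X) (j : ℕ) :
    MeasurableSet[ℱ j] {ω | (j : ℕ∞) < hitTimeLT X k' ω} := by
  simp_rw [lt_hitTimeLT_iff, Set.ofPred_forall]
  exact .iInter fun t => .iInter fun htj =>
    measurableSet_le measurable_const ((hadapt t).mono (ℱ.mono htj) le_rfl)

end HitTime

lemma ENat.toENNReal_eq_tsum_ite_lt (m : ℕ∞) :
    (m : ℝ≥0∞) = ∑' j : ℕ, if (j : ℕ∞) < m then 1 else 0 := by
  induction m using ENat.recTopCoe with
  | top => simp
  | coe N =>
    rw [tsum_eq_sum (s := range N) fun j hj => if_neg (by simpa using hj),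
      sum_congr rfl fun j hj => if_pos (by exact_mod_cast mem_range.1 hj)]
    simp

lemma sum_range_ite_lt_sub_le {τ : ℕ∞} {y : ℕ → ℝ} (hy : ∀ n : ℕ, (n : ℕ∞) ≤ τ → 0 ≤ y n)
    (n : ℕ) : ∑ j ∈ range n, (if (j : ℕ∞) < τ then y j - y (j + 1) else 0) ≤ y 0 := by
  rcases le_or_gt (n : ℕ∞) τ with hn | hn
  · rw [sum_congr rfl fun j hj => if_pos ((Nat.cast_lt.2 (mem_range.1 hj)).trans_le hn),
      sum_range_sub']
    linarith [hy n hn]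
  · obtain ⟨m, rfl⟩ := ENat.ne_top_iff_exists.1 hn.ne_top
    have hmn : m ≤ n := by exact_mod_cast hn.le
    rw [← sum_range_add_sum_Ico _ hmn,
      sum_congr rfl fun j hj => if_pos (Nat.cast_lt.2 (mem_range.1 hj)),
      sum_eq_zero fun j hj => if_neg (by simpa using (mem_Ico.1 hj).1), add_zero, sum_range_sub']
    linarith [hy m le_rfl]

section

variable {Ω : Type*} {m0 : MeasurableSpace Ω} {μ : Measure Ω}

lemma lintegral_toENNReal_eq_tsum_measure {T : Ω → ℕ∞}
    (hT : ∀ j : ℕ, MeasurableSet {ω | (j : ℕ∞) < T ω}) :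
    ∫⁻ ω, (T ω : ℝ≥0∞) ∂μ = ∑' j : ℕ, μ {ω | (j : ℕ∞) < T ω} := by
  calc ∫⁻ ω, (T ω : ℝ≥0∞) ∂μ = ∫⁻ ω, ∑' j : ℕ, {ω | (j : ℕ∞) < T ω}.indicator 1 ω ∂μ := by
        simp only [ENat.toENNReal_eq_tsum_ite_lt, Set.indicator_apply, Set.mem_ofPred_eq,
          Pi.one_apply]
    _ = ∑' j : ℕ, μ {ω | (j : ℕ∞) < T ω} := by
        rw [lintegral_tsum fun j => (measurable_one.indicator (hT j)).aemeasurable]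
        simp only [lintegral_indicator_one (hT _)]

theorem lintegral_le_of_additive_drift [IsFiniteMeasure μ] {T : Ω → ℕ∞} {Y : ℕ → Ω → ℝ}
    (hT : ∀ j : ℕ, MeasurableSet {ω | (j : ℕ∞) < T ω}) (hY : ∀ j, Integrable (Y j) μ)
    (hY_nonneg : ∀ᵐ ω ∂μ, ∀ j : ℕ, (j : ℕ∞) ≤ T ω → 0 ≤ Y j ω)
    (hdrift : ∀ j : ℕ, μ.real {ω | (j : ℕ∞) < T ω}
      ≤ ∫ ω in {ω | (j : ℕ∞) < T ω}, (Y j ω - Y (j + 1) ω) ∂μ) :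
    ∫⁻ ω, (T ω : ℝ≥0∞) ∂μ ≤ ENNReal.ofReal (∫ ω, Y 0 ω ∂μ) := by
  rw [lintegral_toENNReal_eq_tsum_measure hT]
  refine ENNReal.tsum_le_of_sum_range_le fun n => ?_
  have hstep (j : ℕ) : Integrable
      ({ω | (j : ℕ∞) < T ω}.indicator fun ω => Y j ω - Y (j + 1) ω) μ :=
    ((hY j).sub (hY (j + 1))).indicator (hT j)
  have hsum : ∑ j ∈ range n, μ.real {ω | (j : ℕ∞) < T ω} ≤ ∫ ω, Y 0 ω ∂μ := calc
    _ ≤ ∑ j ∈ range n, ∫ ω in {ω | (j : ℕ∞) < T ω}, (Y j ω - Y (j + 1) ω) ∂μ :=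
        sum_le_sum fun j _ => hdrift j
    _ = ∫ ω, ∑ j ∈ range n,
          {ω | (j : ℕ∞) < T ω}.indicator (fun ω => Y j ω - Y (j + 1) ω) ω ∂μ := by
        rw [integral_finsetSum _ fun j _ => hstep j]
        exact sum_congr rfl fun j _ => (integral_indicator (hT j)).symm
    _ ≤ ∫ ω, Y 0 ω ∂μ := by
        refine integral_mono_ae (integrable_finsetSum _ fun j _ => hstep j) (hY 0) ?_
        filter_upwards [hY_nonneg] with ω hω
        simpa only [Set.indicator_apply, Set.mem_ofPred_eq] using sum_range_ite_lt_sub_le hω n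
  calc ∑ j ∈ range n, μ {ω | (j : ℕ∞) < T ω}
      = ENNReal.ofReal (∑ j ∈ range n, μ.real {ω | (j : ℕ∞) < T ω}) := by
        rw [ENNReal.ofReal_sum_of_nonneg fun _ _ => measureReal_nonneg]
        exact sum_congr rfl fun j _ => (ofReal_measureReal (measure_ne_top μ _)).symm
    _ ≤ ENNReal.ofReal (∫ ω, Y 0 ω ∂μ) := ENNReal.ofReal_le_ofReal hsum

lemma measureReal_le_setIntegral_mul_sub_of_condExp [IsFiniteMeasure μ] {m : MeasurableSpace Ω}
    (hm : m ≤ m0) {s : Set Ω} (hs : MeasurableSet[m] s) {c U V : Ω → ℝ} {C : ℝ}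
    (hc : StronglyMeasurable[m] c) (hcC : ∀ ω, ‖c ω‖ ≤ C)
    (hU : Integrable U μ) (hV : Integrable V μ)
    (hdrift : ∀ᵐ ω ∂μ, ω ∈ s → 1 ≤ c ω * (U ω - μ[V|m] ω)) :
    μ.real s ≤ ∫ ω in s, c ω * (U ω - V ω) ∂μ := by
  have hc' : AEStronglyMeasurable[m0] c μ := (hc.mono hm).aestronglyMeasurable
  have hcU := hU.bdd_mul hc' (ae_of_all _ hcC)
  have hcV := hV.bdd_mul hc' (ae_of_all _ hcC)
  have hcE := (integrable_condExp (m := m) (f := V)).bdd_mul hc' (ae_of_all _ hcC)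
  have hpull : ∫ ω in s, c ω * μ[V|m] ω ∂μ = ∫ ω in s, c ω * V ω ∂μ := by
    rw [← setIntegral_condExp hm hcV hs]
    exact setIntegral_congr_ae (hm s hs)
      ((condExp_mul_of_stronglyMeasurable_left hc hcV hV).mono fun ω h _ => h.symm)
  calc μ.real s = ∫ _ in s, (1 : ℝ) ∂μ := by simp
    _ ≤ ∫ ω in s, c ω * (U ω - μ[V|m] ω) ∂μ := by
        refine setIntegral_mono_on_ae integrableOn_const ?_ (hm s hs) hdrift
        simp_rw [mul_sub]
        exact (hcU.sub hcE).integrableOn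
    _ = ∫ ω in s, c ω * (U ω - V ω) ∂μ := by
        simp_rw [mul_sub]
        rw [integral_sub hcU.integrableOn hcE.integrableOn, hpull,
          integral_sub hcU.integrableOn hcV.integrableOn]

end

lemma sub_mul_le_integral_of_antitone {φ : ℝ → ℝ} (hφ : Antitone φ) (x y : ℝ) :
    (x - y) * φ x ≤ ∫ z in y..x, φ z := by
  rcases le_total y x with hyx | hxy
  · calc (x - y) * φ x = ∫ _ in y..x, φ x := by simp
      _ ≤ ∫ z in y..x, φ z := intervalIntegral.integral_mono_on hyx intervalIntegrable_const
          hφ.intervalIntegrable fun z hz => hφ hz.2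
  · have : ∫ z in x..y, φ z ≤ (y - x) * φ x := calc
      ∫ z in x..y, φ z ≤ ∫ _ in x..y, φ x := intervalIntegral.integral_mono_on hxy
          hφ.intervalIntegrable intervalIntegrable_const fun z hz => hφ hz.1
      _ = (y - x) * φ x := by simp
    rw [intervalIntegral.integral_symm]
    linarith

theorem lintegral_le_integral_of_antitone_drift {Ω : Type*} {m0 : MeasurableSpace Ω}
    {μ : Measure Ω} [IsProbabilityMeasure μ] {ℱ : Filtration ℕ m0} {X : ℕ → Ω → ℝ}
    (hadapt : Adapted ℱ X) (hint : ∀ t, Integrable (X t) μ) {T : Ω → ℕ∞}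
    (hT : ∀ t : ℕ, MeasurableSet[ℱ t] {ω | (t : ℕ∞) < T ω}) {x0 : ℝ} (hX0 : ∀ ω, X 0 ω = x0)
    (hX_nonneg : ∀ᵐ ω ∂μ, ∀ t : ℕ, (t : ℕ∞) ≤ T ω → 0 ≤ X t ω)
    {φ : ℝ → ℝ} {C : ℝ} (hφ : Antitone φ) (hφ_nonneg : ∀ z, 0 ≤ φ z) (hφC : ∀ z, φ z ≤ C)
    (hdrift : ∀ t : ℕ, ∀ᵐ ω ∂μ, (t : ℕ∞) < T ω → 1 ≤ φ (X t ω) * (X t ω - μ[X (t + 1)|ℱ t] ω)) :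
    ∫⁻ ω, (T ω : ℝ≥0∞) ∂μ ≤ ENNReal.ofReal (∫ z in 0..x0, φ z) := by
  set G : ℝ → ℝ := fun x => ∫ z in 0..x, φ z
  have hG_sub (x y : ℝ) : (x - y) * φ x ≤ G x - G y := by
    rw [intervalIntegral.integral_interval_sub_left hφ.intervalIntegrable hφ.intervalIntegrable]
    exact sub_mul_le_integral_of_antitone hφ x y
  have hG_mono : Monotone G := fun x y hxy => by
    nlinarith [hG_sub y x, hφ_nonneg y]
  have hG_le (x : ℝ) : ‖G x‖ ≤ C * ‖x‖ := by
    simpa using intervalIntegral.norm_integral_le_of_norm_le_const (a := 0) (b := x) (f := φ)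
      fun z _ => (Real.norm_of_nonneg (hφ_nonneg z)).trans_le (hφC z)
  have hY (t : ℕ) : Integrable (fun ω => G (X t ω)) μ :=
    ((hint t).norm.const_mul C).mono'
      (hG_mono.measurable.comp_aemeasurable (hint t).aemeasurable).aestronglyMeasurable
      (ae_of_all _ fun ω => hG_le (X t ω))
  refine (lintegral_le_of_additive_drift (fun t => ℱ.le t _ (hT t)) hY ?_ fun t => ?_).trans_eq ?_
  · filter_upwards [hX_nonneg] with ω hω t ht
    simpa [G] using hG_mono (hω t ht)
  · have hc_meas : StronglyMeasurable[ℱ t] fun ω => φ (X t ω) :=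
      (hφ.measurable.comp (hadapt t)).stronglyMeasurable
    have hc_le (ω : Ω) : ‖φ (X t ω)‖ ≤ C := (Real.norm_of_nonneg (hφ_nonneg _)).trans_le (hφC _)
    refine (measureReal_le_setIntegral_mul_sub_of_condExp (ℱ.le t) (hT t) hc_meas hc_le
      (hint t) (hint (t + 1)) (hdrift t)).trans
      (setIntegral_mono_on ?_ ((hY t).sub (hY (t + 1))).integrableOn (ℱ.le t _ (hT t))
        fun ω _ => ?_)
    · exact (((hint t).sub (hint (t + 1))).bdd_mul (hc_meas.mono (ℱ.le t)).aestronglyMeasurable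
        (ae_of_all _ hc_le)).integrableOn
    · linarith [hG_sub (X t ω) (X (t + 1) ω), mul_comm (φ (X t ω)) (X t ω - X (t + 1) ω)]
  · simp [hX0, G]

lemma antitone_inv_comp_max {h : ℝ → ℝ} {k' : ℝ} (hpos : ∀ z, k' ≤ z → 0 < h z)
    (hmono : MonotoneOn h (Set.Ici k')) : Antitone fun z => (h (max z k'))⁻¹ :=
  fun a b hab => inv_anti₀ (hpos _ (le_max_right a k'))
    (hmono (le_max_right a k') (le_max_right b k') (max_le_max_right k' hab))

lemma integral_inv_comp_max_eq {h : ℝ → ℝ} {k' x0 : ℝ}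
    (hφ : Antitone fun z => (h (max z k'))⁻¹) (hk' : 0 ≤ k') (hx0 : k' ≤ x0) :
    ∫ z in 0..x0, (h (max z k'))⁻¹ = k' / h k' + ∫ z in k'..x0, 1 / h z := by
  rw [← intervalIntegral.integral_add_adjacent_intervals (b := k') hφ.intervalIntegrable
    hφ.intervalIntegrable]
  congr 1
  · rw [intervalIntegral.integral_congr (g := fun _ => (h k')⁻¹) fun z hz => by
      simp [max_eq_right (Set.uIcc_of_le hk' ▸ hz).2]]
    simp [div_eq_mul_inv]
  · exact intervalIntegral.integral_congr fun z hz => by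
      simp [max_eq_left (Set.uIcc_of_le hx0 ▸ hz).1]

/-- Variable drift, fixed-target upper bound: if the adapted integrable process starts at the
deterministic value `x0 ≥ k' > 0`, is nonnegative up to the hitting time
`T = inf{t : X_t < k'}`, and `h : [k',∞) → (0,∞)` is monotonically increasing with
`X_t − E[X_{t+1} | F_t] ≥ h(X_t)` before time `T`, then
`E[T] ≤ k'/h(k') + ∫_{k'}^{x0} 1/h(z) dz`. -/
theorem variable_drift_fixed_target_upper
    {Ω : Type*} {m0 : MeasurableSpace Ω} (μ : Measure Ω) [IsProbabilityMeasure μ]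
    (ℱ : Filtration ℕ m0) (X : ℕ → Ω → ℝ)
    (hadapt : Adapted ℱ X) (hint : ∀ t, Integrable (X t) μ)
    (k' x0 : ℝ) (hk' : 0 < k') (hx0 : k' ≤ x0) (hX0 : ∀ ω, X 0 ω = x0)
    (hnonneg : ∀ᵐ ω ∂μ, ∀ t : ℕ, (t : ℕ∞) ≤ hitTimeLT X k' ω → 0 ≤ X t ω)
    (h : ℝ → ℝ) (hpos : ∀ z, k' ≤ z → 0 < h z) (hmono : MonotoneOn h (Set.Ici k'))
    (hdrift : ∀ t : ℕ, ∀ᵐ ω ∂μ, (t : ℕ∞) < hitTimeLT X k' ω →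
      h (X t ω) ≤ X t ω - (μ[X (t + 1)|ℱ t]) ω) :
    ∫⁻ ω, ((hitTimeLT X k' ω : ℕ∞) : ENNReal) ∂μ
      ≤ ENNReal.ofReal (k' / h k' + ∫ z in k'..x0, 1 / h z) := by
  have hφ := antitone_inv_comp_max hpos hmono
  rw [← integral_inv_comp_max_eq hφ hk'.le hx0]
  refine lintegral_le_integral_of_antitone_drift hadapt hint (measurableSet_lt_hitTimeLT hadapt)
    hX0 hnonneg hφ (fun z => (inv_pos.2 (hpos _ (le_max_right z k'))).le)
    (fun z => inv_anti₀ (hpos k' le_rfl)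
      (hmono Set.self_mem_Ici (le_max_right z k') (le_max_right z k')))
    fun t => ?_
  filter_upwards [hdrift t] with ω hω ht
  have hk : k' ≤ X t ω := lt_hitTimeLT_iff.1 ht t le_rfl
  rw [max_eq_left hk, one_le_inv_mul₀ (hpos _ hk)]
  exact hω ht
end

section
/- (Overshoot-aware multiplicative drift, upper bound.) Let D ⊆ {0} ∪ (0, ∞) and let (X_t)_{t∈ℕ} be integrable random variables adapted to a filtration (F_t), taking values in D. Let k ∈ D be the target, let T = inf{t : X_t ≤ k}, and let k' = inf{x ∈ D : x > k}; assume k' > 0, that X_0 = x_0 ≥ k' is deterministic, that T is almost surely finite, and that X_T is integrable, where X_T denotes the value of the process at time T. Suppose there is δ > 0 such that for all t, on the event {t < T}, X_t − E[X_{t+1} | F_t] ≥ δ·X_t almost surely. Then E[T] ≤ (1/δ) · ( 1 − E[X_T]/k' + ln(x_0 / k') ). -/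
open MeasureTheory

/-- First time at which the process `X` takes a value `≤ k` (`⊤` if this never happens). -/
noncomputable def hitTimeLE {Ω : Type*} (X : ℕ → Ω → ℝ) (k : ℝ) (ω : Ω) : ℕ∞ :=
  sInf {r : ℕ∞ | ∃ t : ℕ, r = (t : ℕ∞) ∧ X t ω ≤ k}

/-- The value `X_T` of the process at the (a.s. finite) stopping time `T`. -/
noncomputable def stoppedVal {Ω : Type*} (X : ℕ → Ω → ℝ) (T : Ω → ℕ∞) (ω : Ω) : ℝ :=
  X (T ω).toNat ω

/-!
The potential `g = overshootPotential k k'`, equal to `x / k'` for `x ≤ k` and to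
`1 + log (x / k')` for `x > k`, satisfies `g y - g x ≤ y / x - 1` whenever `x > k`, so by the
drift condition the expected potential of the stopped process drops by at least `δ · P(t < T)` in step `t`. Since `g` is monotone on the values
the process can take and `X_T ≤ k < X_t` for `t < T`, the stopped potential never falls below
`g X_T = X_T / k'`. Summing the decrements and using `E[T] = ∑ₜ P(t < T)` gives the bound.
-/

open Set
open scoped ENNReal

section HittingTime

variable {Ω : Type*}

lemma hitTimeLE_eq_hittingAfter (X : ℕ → Ω → ℝ) (k : ℝ) :
    hitTimeLE X k = hittingAfter X (Iic k) 0 := by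
  classical
  ext1 ω
  simp only [hittingAfter, zero_le, true_and, mem_Iic]
  split_ifs with h
  · rw [Nat.sInf_def (s := {j | X j ω ≤ k}) h, ENat.some_eq_natCast]
    refine le_antisymm (sInf_le ⟨_, rfl, Nat.find_spec h⟩) (le_sInf ?_)
    rintro r ⟨t, rfl, ht⟩
    exact Nat.cast_le.2 (Nat.find_min' h ht)
  · refine sInf_eq_top.2 ?_
    rintro r ⟨t, rfl, ht⟩
    exact absurd ⟨t, ht⟩ h

variable {X : ℕ → Ω → ℝ} {k : ℝ} {ω : Ω}

lemma MeasureTheory.Adapted.isStoppingTime_hitTimeLE {m0 : MeasurableSpace Ω}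
    {ℱ : Filtration ℕ m0} (hX : Adapted ℱ X) (k : ℝ) : IsStoppingTime ℱ (hitTimeLE X k) := by
  rw [hitTimeLE_eq_hittingAfter]
  exact hX.isStoppingTime_hittingAfter measurableSet_Iic

lemma lt_of_lt_hitTimeLE {t : ℕ} (ht : (t : ℕ∞) < hitTimeLE X k ω) : k < X t ω := by
  rw [hitTimeLE_eq_hittingAfter] at ht
  simpa using notMem_of_lt_hittingAfter ht t.zero_le

lemma stoppedVal_eq_stoppedValue {T : Ω → ℕ∞} (h : T ω ≠ ⊤) :
    stoppedVal X T ω = stoppedValue X T ω := by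
  obtain ⟨t, ht⟩ := ENat.ne_top_iff_exists.1 h
  simp [stoppedVal, stoppedValue, ← ht]

lemma stoppedVal_hitTimeLE_le (h : hitTimeLE X k ω ≠ ⊤) : stoppedVal X (hitTimeLE X k) ω ≤ k := by
  rw [stoppedVal_eq_stoppedValue h, hitTimeLE_eq_hittingAfter] at *
  exact hittingAfter_mem_set_of_ne_top h

lemma stoppedVal_hitTimeLE_le_stoppedProcess (h : hitTimeLE X k ω ≠ ⊤) (n : ℕ) :
    stoppedVal X (hitTimeLE X k) ω ≤ stoppedProcess X (hitTimeLE X k) n ω := by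
  rcases le_or_gt (hitTimeLE X k ω) n with hle | hlt
  · rw [stoppedProcess_eq_of_ge hle, stoppedVal_eq_stoppedValue h]
    rfl
  · rw [stoppedProcess_eq_of_le hlt.le]
    exact (stoppedVal_hitTimeLE_le h).trans (lt_of_lt_hitTimeLE hlt).le

end HittingTime

lemma stoppedProcess_add_one_sub {Ω β : Type*} [AddGroup β] (u : ℕ → Ω → β) (τ : Ω → ℕ∞)
    (t : ℕ) (ω : Ω) :
    stoppedProcess u τ (t + 1) ω - stoppedProcess u τ t ω
      = {ω | (t : ℕ∞) < τ ω}.indicator (fun ω => u (t + 1) ω - u t ω) ω := by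
  by_cases h : (t : ℕ∞) < τ ω
  · rw [indicator_of_mem (s := {ω | (t : ℕ∞) < τ ω}) h, stoppedProcess_eq_of_le h.le,
      stoppedProcess_eq_of_le (Order.add_one_le_of_lt h)]
  · rw [indicator_of_notMem (s := {ω | (t : ℕ∞) < τ ω}) h, stoppedProcess_eq_of_ge (not_lt.1 h),
      stoppedProcess_eq_of_ge ((not_lt.1 h).trans (WithTop.coe_le_coe.2 t.le_succ)), sub_self]

lemma ENat.toENNReal_eq_tsum_indicator (n : ℕ∞) :
    (n : ℝ≥0∞) = ∑' t : ℕ, {t : ℕ | (t : ℕ∞) < n}.indicator 1 t := by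
  rw [← tsum_subtype]
  simp only [Pi.one_apply, ENNReal.tsum_set_one]
  induction n with
  | top => simp [Set.encard_univ]
  | coe n =>
    rw [show {t : ℕ | ((t : ℕ∞)) < n} = Finset.range n by ext; simp,
      Set.encard_coe_eq_coe_finsetCard]
    simp

lemma lintegral_toENNReal_eq_tsum_measure_lt {Ω : Type*} {m0 : MeasurableSpace Ω} {μ : Measure Ω}
    {τ : Ω → ℕ∞} (hτ : ∀ t : ℕ, MeasurableSet {ω | (t : ℕ∞) < τ ω}) :
    ∫⁻ ω, (τ ω : ℝ≥0∞) ∂μ = ∑' t : ℕ, μ {ω | (t : ℕ∞) < τ ω} := by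
  simp_rw [ENat.toENNReal_eq_tsum_indicator]
  rw [lintegral_tsum fun t => ?_]
  · congr with t
    rw [← lintegral_indicator_one (hτ t)]
    rfl
  · exact (measurable_one.indicator (hτ t)).aemeasurable

lemma lintegral_toENNReal_le_of_drift {Ω : Type*} {m0 : MeasurableSpace Ω} {μ : Measure Ω}
    [IsFiniteMeasure μ] {τ : Ω → ℕ∞} (hτ : ∀ t : ℕ, MeasurableSet {ω | (t : ℕ∞) < τ ω})
    {a : ℕ → ℝ} {δ L : ℝ} (hδ : 0 < δ)
    (hstep : ∀ t, a (t + 1) + δ * μ.real {ω | (t : ℕ∞) < τ ω} ≤ a t) (hlow : ∀ n, L ≤ a n) :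
    ∫⁻ ω, (τ ω : ℝ≥0∞) ∂μ ≤ ENNReal.ofReal ((a 0 - L) / δ) := by
  rw [lintegral_toENNReal_eq_tsum_measure_lt hτ]
  refine ENNReal.tsum_le_of_sum_range_le fun n => ?_
  have htelescope : a n + δ * ∑ t ∈ Finset.range n, μ.real {ω | (t : ℕ∞) < τ ω} ≤ a 0 := by
    induction n with
    | zero => simp
    | succ n ih => rw [Finset.sum_range_succ]; linarith [hstep n]
  calc ∑ t ∈ Finset.range n, μ {ω | (t : ℕ∞) < τ ω}
      = ENNReal.ofReal (∑ t ∈ Finset.range n, μ.real {ω | (t : ℕ∞) < τ ω}) := by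
        rw [ENNReal.ofReal_sum_of_nonneg fun _ _ => measureReal_nonneg]
        exact Finset.sum_congr rfl fun t _ => (ofReal_measureReal).symm
    _ ≤ ENNReal.ofReal ((a 0 - L) / δ) := by
        gcongr
        rw [le_div_iff₀ hδ]
        linarith [hlow n]

section ConditionalRatio

variable {Ω : Type*} {m m0 : MeasurableSpace Ω} {μ : Measure Ω}

lemma integral_mul_condExp_of_bound [IsFiniteMeasure μ] (hm : m ≤ m0) {f g : Ω → ℝ}
    (hf : StronglyMeasurable[m] f) {c : ℝ} (hfc : ∀ ω, ‖f ω‖ ≤ c) (hg : Integrable g μ) :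
    ∫ ω, f ω * μ[g|m] ω ∂μ = ∫ ω, f ω * g ω ∂μ :=
  (integral_congr_ae (condExp_stronglyMeasurable_mul_of_bound hm hf hg c (ae_of_all _ hfc))).symm
    |>.trans (integral_condExp hm)

lemma integrableOn_div_of_le {A : Set Ω} (hA : MeasurableSet A) {V Y : Ω → ℝ}
    (hV : AEStronglyMeasurable V μ) {c : ℝ} (hc : 0 < c) (hVc : ∀ ω ∈ A, c ≤ V ω)
    (hY : Integrable Y μ) : IntegrableOn (fun ω => Y ω / V ω) A μ := by
  refine Integrable.mono' (hY.norm.div_const c).integrableOn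
    (hY.aestronglyMeasurable.div₀ hV).restrict
    ((ae_restrict_iff' hA).2 (ae_of_all _ fun ω hω => ?_))
  have hV0 : 0 < V ω := hc.trans_le (hVc ω hω)
  rw [norm_div, Real.norm_of_nonneg hV0.le]
  exact div_le_div_of_nonneg_left (norm_nonneg _) hc (hVc ω hω)

variable [IsFiniteMeasure μ] {A : Set Ω} {V Y : Ω → ℝ} {c : ℝ}

lemma setIntegral_condExp_div (hm : m ≤ m0) (hA : MeasurableSet[m] A)
    (hV : Measurable[m] V) (hc : 0 < c) (hVc : ∀ ω ∈ A, c ≤ V ω) (hY : Integrable Y μ) :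
    ∫ ω in A, μ[Y|m] ω / V ω ∂μ = ∫ ω in A, Y ω / V ω ∂μ := by
  have hdiv (F : Ω → ℝ) : ∫ ω in A, F ω / V ω ∂μ = ∫ ω, A.indicator V⁻¹ ω * F ω ∂μ := by
    rw [← integral_indicator (hm A hA)]
    congr with ω
    by_cases hω : ω ∈ A <;> simp [hω, div_eq_inv_mul]
  have hbound (ω : Ω) : ‖A.indicator V⁻¹ ω‖ ≤ c⁻¹ := by
    by_cases hω : ω ∈ A
    · have hV0 : 0 < V ω := hc.trans_le (hVc ω hω)
      simpa [hω, abs_of_pos hV0] using inv_anti₀ hc (hVc ω hω)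
    · simpa [hω] using hc.le
  rw [hdiv, hdiv]
  exact integral_mul_condExp_of_bound hm (hV.stronglyMeasurable.inv₀.indicator hA) hbound hY

lemma setIntegral_div_le_of_condExp_le (hm : m ≤ m0) (hA : MeasurableSet[m] A)
    (hV : Measurable[m] V) (hc : 0 < c) (hVc : ∀ ω ∈ A, c ≤ V ω) (hY : Integrable Y μ)
    {r : ℝ} (hr : ∀ᵐ ω ∂μ, ω ∈ A → μ[Y|m] ω ≤ r * V ω) :
    ∫ ω in A, Y ω / V ω ∂μ ≤ r * μ.real A := by
  have hV' : AEStronglyMeasurable V μ := (hV.mono hm le_rfl).aestronglyMeasurable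
  rw [← setIntegral_condExp_div hm hA hV hc hVc hY, mul_comm, ← smul_eq_mul, ← setIntegral_const]
  refine setIntegral_mono_on_ae (integrableOn_div_of_le (hm A hA) hV' hc hVc integrable_condExp)
    (integrableOn_const (by finiteness)) (hm A hA) ?_
  filter_upwards [hr] with ω hω hωA
  rw [div_le_iff₀ (hc.trans_le (hVc ω hωA))]
  exact hω hωA

end ConditionalRatio

-- Positivity rules out the junk value `sInf ∅ = 0`.
lemma le_sInf_of_sInf_pos {D : Set ℝ} {k : ℝ} (h : 0 < sInf {y | y ∈ D ∧ k < y}) :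
    k ≤ sInf {y | y ∈ D ∧ k < y} := by
  refine le_csInf ?_ fun y hy => hy.2.le
  exact Set.nonempty_iff_ne_empty.2 fun hempty => by simp [hempty] at h

lemma le_or_sInf_le_of_mem {D : Set ℝ} {k x : ℝ} (hx : x ∈ D) :
    x ≤ k ∨ sInf {y | y ∈ D ∧ k < y} ≤ x :=
  (le_or_gt x k).imp_right fun hkx => csInf_le ⟨k, fun _ hy => hy.2.le⟩ ⟨hx, hkx⟩

noncomputable def overshootPotential (k k' x : ℝ) : ℝ :=
  if x ≤ k then x / k' else 1 + Real.log (x / k')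

section OvershootPotential

variable {k k' x y : ℝ}

lemma overshootPotential_of_le (h : x ≤ k) : overshootPotential k k' x = x / k' := if_pos h

lemma overshootPotential_of_lt (h : k < x) :
    overshootPotential k k' x = 1 + Real.log (x / k') := if_neg h.not_ge

lemma overshootPotential_of_ge (hk' : 0 < k') (hkk' : k ≤ k') (hx : k' ≤ x) :
    overshootPotential k k' x = 1 + Real.log (x / k') := by
  rcases le_or_gt x k with hxk | hkx
  · obtain rfl : x = k' := le_antisymm (hxk.trans hkk') hx
    simp [overshootPotential_of_le hxk, hk'.ne']
  · exact overshootPotential_of_lt hkx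

lemma measurable_overshootPotential (k k' : ℝ) : Measurable (overshootPotential k k') :=
  Measurable.ite measurableSet_Iic (measurable_id.div_const _)
    ((measurable_id.div_const _).log.const_add 1)

lemma abs_overshootPotential_le (hk' : 0 < k') (hx : x ≤ k ∨ k' ≤ x) :
    |overshootPotential k k' x| ≤ 1 + |x| / k' := by
  rcases le_or_gt x k with hxk | hkx
  · rw [overshootPotential_of_le hxk, abs_div, abs_of_pos hk']
    linarith
  · have hx' : k' ≤ x := hx.resolve_left hkx.not_ge
    have hlog_nonneg : 0 ≤ Real.log (x / k') := Real.log_nonneg ((one_le_div hk').2 hx')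
    have hlog_le : Real.log (x / k') ≤ x / k' - 1 :=
      Real.log_le_sub_one_of_pos (div_pos (hk'.trans_le hx') hk')
    rw [overshootPotential_of_lt hkx, abs_of_nonneg (by linarith), abs_of_pos (hk'.trans_le hx')]
    linarith

lemma monotoneOn_overshootPotential (hk' : 0 < k') (hkk' : k ≤ k') :
    MonotoneOn (overshootPotential k k') (Iic k ∪ Ici k') := by
  intro x hx y hy hxy
  rcases le_or_gt y k with hyk | hky
  · rw [overshootPotential_of_le hyk, overshootPotential_of_le (hxy.trans hyk)]
    gcongr
  have hy' : k' ≤ y := hy.resolve_left hky.not_ge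
  rw [overshootPotential_of_lt hky]
  rcases le_or_gt x k with hxk | hkx
  · rw [overshootPotential_of_le hxk]
    have : x / k' ≤ 1 := (div_le_one hk').2 (hxk.trans hkk')
    linarith [Real.log_nonneg ((one_le_div hk').2 hy')]
  · have hx' : k' ≤ x := hx.resolve_left hkx.not_ge
    rw [overshootPotential_of_lt hkx]
    gcongr
    exact div_pos (hk'.trans_le hx') hk'

lemma overshootPotential_sub_le (hk' : 0 < k') (hkk' : k ≤ k') (hkx : k < x) (hx : k' ≤ x)
    (hy : y ≤ k ∨ k' ≤ y) :
    overshootPotential k k' y - overshootPotential k k' x ≤ y / x - 1 := by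
  have hx0 : 0 < x := hk'.trans_le hx
  rw [overshootPotential_of_lt hkx]
  rcases le_or_gt y k with hyk | hky
  · have hlog : 1 - k' / x ≤ Real.log (x / k') := by
      have := Real.log_le_sub_one_of_pos (div_pos hk' hx0)
      rw [Real.log_div hk'.ne' hx0.ne'] at this
      rw [Real.log_div hx0.ne' hk'.ne']
      linarith
    have hlin : 1 - k' / x - (y / k' - y / x) = (k' - y) * (x - k') / (k' * x) := by
      field_simp
    have : 0 ≤ (k' - y) * (x - k') / (k' * x) := by
      have := sub_nonneg.2 (hyk.trans hkk')
      have := sub_nonneg.2 hx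
      positivity
    rw [overshootPotential_of_le hyk]
    linarith
  · have hy0 : 0 < y := hk'.trans_le (hy.resolve_left hky.not_ge)
    have := Real.log_le_sub_one_of_pos (div_pos hy0 hx0)
    rw [overshootPotential_of_lt hky, Real.log_div hy0.ne' hk'.ne', Real.log_div hx0.ne' hk'.ne']
    rw [Real.log_div hy0.ne' hx0.ne'] at this
    linarith

end OvershootPotential

section StoppedPotential

variable {Ω : Type*} {m0 : MeasurableSpace Ω} {μ : Measure Ω} [IsFiniteMeasure μ]
  {ℱ : Filtration ℕ m0} {X : ℕ → Ω → ℝ} {k k' : ℝ}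

lemma integrable_overshootPotential_comp (hk' : 0 < k') {Y : Ω → ℝ} (hY : Integrable Y μ)
    (hYk : ∀ ω, Y ω ≤ k ∨ k' ≤ Y ω) : Integrable (fun ω => overshootPotential k k' (Y ω)) μ :=
  Integrable.mono' ((integrable_const 1).add (hY.abs.div_const k'))
    ((measurable_overshootPotential k k').comp_aemeasurable hY.aemeasurable).aestronglyMeasurable
    (ae_of_all _ fun ω => abs_overshootPotential_le hk' (hYk ω))

lemma integral_stoppedProcess_overshootPotential_add_one_add_le (hadapt : Adapted ℱ X)
    (hint : ∀ t, Integrable (X t) μ) (hXk : ∀ t ω, X t ω ≤ k ∨ k' ≤ X t ω) (hk' : 0 < k')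
    (hkk' : k ≤ k') {δ : ℝ} (t : ℕ)
    (hdrift : ∀ᵐ ω ∂μ, (t : ℕ∞) < hitTimeLE X k ω → δ * X t ω ≤ X t ω - μ[X (t + 1)|ℱ t] ω) :
    ∫ ω, stoppedProcess (fun t ω => overshootPotential k k' (X t ω)) (hitTimeLE X k) (t + 1) ω ∂μ
        + δ * μ.real {ω | (t : ℕ∞) < hitTimeLE X k ω}
      ≤ ∫ ω, stoppedProcess (fun t ω => overshootPotential k k' (X t ω)) (hitTimeLE X k) t ω ∂μ :=
    by
  set A := {ω | (t : ℕ∞) < hitTimeLE X k ω}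
  set g := overshootPotential k k'
  have hA : MeasurableSet[ℱ t] A := (hadapt.isStoppingTime_hitTimeLE k).measurableSet_gt t
  have hA0 : MeasurableSet A := ℱ.le t _ hA
  have hXA : ∀ ω ∈ A, k' ≤ X t ω := fun ω hω =>
    (hXk t ω).resolve_left (lt_of_lt_hitTimeLE hω).not_ge
  have hg (s : ℕ) : Integrable (fun ω => g (X s ω)) μ :=
    integrable_overshootPotential_comp hk' (hint s) (hXk s)
  have hZ := integrable_stoppedProcess (hadapt.isStoppingTime_hitTimeLE k) hg
  have hincrement : ∫ ω, stoppedProcess (fun t ω => g (X t ω)) (hitTimeLE X k) (t + 1) ω ∂μ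
      - ∫ ω, stoppedProcess (fun t ω => g (X t ω)) (hitTimeLE X k) t ω ∂μ
      = ∫ ω in A, (g (X (t + 1) ω) - g (X t ω)) ∂μ := by
    rw [← integral_sub (hZ _) (hZ _), ← integral_indicator hA0]
    exact integral_congr_ae (ae_of_all _ fun ω => stoppedProcess_add_one_sub _ _ t ω)
  have hratio : ∫ ω in A, X (t + 1) ω / X t ω ∂μ ≤ (1 - δ) * μ.real A := by
    refine setIntegral_div_le_of_condExp_le (ℱ.le t) hA (hadapt t) hk' hXA (hint (t + 1)) ?_
    filter_upwards [hdrift] with ω hω hωA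
    linarith [hω hωA]
  have hpotential : ∫ ω in A, (g (X (t + 1) ω) - g (X t ω)) ∂μ
      ≤ ∫ ω in A, (X (t + 1) ω / X t ω - 1) ∂μ := by
    refine setIntegral_mono_on ((hg _).sub (hg _)).integrableOn
      ((integrableOn_div_of_le hA0 (hint t).aestronglyMeasurable hk' hXA (hint _)).sub
        (integrableOn_const (by finiteness))) hA0 fun ω hω => ?_
    exact overshootPotential_sub_le hk' hkk' (lt_of_lt_hitTimeLE hω) (hXA ω hω) (hXk _ ω)
  rw [integral_sub (integrableOn_div_of_le hA0 (hint t).aestronglyMeasurable hk' hXA (hint _))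
    (integrableOn_const (by finiteness)), setIntegral_const, smul_eq_mul, mul_one] at hpotential
  linarith

end StoppedPotential

theorem overshoot_aware_multiplicative_drift_upper_general
    {Ω : Type*} {m0 : MeasurableSpace Ω} (μ : Measure Ω) [IsProbabilityMeasure μ]
    (ℱ : Filtration ℕ m0) (X : ℕ → Ω → ℝ)
    (hadapt : Adapted ℱ X) (hint : ∀ t, Integrable (X t) μ)
    (D : Set ℝ) (hXD : ∀ t ω, X t ω ∈ D)
    (k : ℝ)
    (k' : ℝ) (hk'def : k' = sInf {x | x ∈ D ∧ k < x}) (hk'pos : 0 < k')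
    (x0 : ℝ) (hx0 : k' ≤ x0) (hX0 : ∀ ω, X 0 ω = x0)
    (hfin : ∀ᵐ ω ∂μ, hitTimeLE X k ω < ⊤)
    (hTint : Integrable (stoppedVal X (hitTimeLE X k)) μ)
    (δ : ℝ) (hδ : 0 < δ)
    (hdrift : ∀ t : ℕ, ∀ᵐ ω ∂μ, (t : ℕ∞) < hitTimeLE X k ω →
      δ * X t ω ≤ X t ω - (μ[X (t + 1)|ℱ t]) ω) :
    ∫⁻ ω, ((hitTimeLE X k ω : ℕ∞) : ENNReal) ∂μ
      ≤ ENNReal.ofReal ((1 / δ) *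
          (1 - (∫ ω, stoppedVal X (hitTimeLE X k) ω ∂μ) / k' + Real.log (x0 / k'))) := by
  have hkk' : k ≤ k' := hk'def ▸ le_sInf_of_sInf_pos (hk'def ▸ hk'pos)
  have hXk : ∀ t ω, X t ω ≤ k ∨ k' ≤ X t ω := fun t ω => hk'def ▸ le_or_sInf_le_of_mem (hXD t ω)
  set Z := stoppedProcess (fun t ω => overshootPotential k k' (X t ω)) (hitTimeLE X k)
  have hZ0 : ∫ ω, Z 0 ω ∂μ = 1 + Real.log (x0 / k') := by
    have hZ0_apply (ω : Ω) : Z 0 ω = 1 + Real.log (x0 / k') := by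
      refine (stoppedProcess_eq_of_le zero_le).trans ?_
      rw [hX0, overshootPotential_of_ge hk'pos hkk' hx0]
    simp [hZ0_apply]
  have hlow (n : ℕ) : ∫ ω, stoppedVal X (hitTimeLE X k) ω / k' ∂μ ≤ ∫ ω, Z n ω ∂μ := by
    refine integral_mono_ae (hTint.div_const k') (integrable_stoppedProcess
      (hadapt.isStoppingTime_hitTimeLE k)
      (fun t => integrable_overshootPotential_comp hk'pos (hint t) (hXk t)) n) ?_
    filter_upwards [hfin] with ω hω
    have hT := stoppedVal_hitTimeLE_le hω.ne
    rw [← overshootPotential_of_le hT]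
    exact monotoneOn_overshootPotential hk'pos hkk' (Or.inl hT) (hXk _ ω)
      (stoppedVal_hitTimeLE_le_stoppedProcess hω.ne n)
  calc ∫⁻ ω, ((hitTimeLE X k ω : ℕ∞) : ENNReal) ∂μ
      ≤ ENNReal.ofReal ((∫ ω, Z 0 ω ∂μ - ∫ ω, stoppedVal X (hitTimeLE X k) ω / k' ∂μ) / δ) :=
        lintegral_toENNReal_le_of_drift
          (fun t => ℱ.le t _ ((hadapt.isStoppingTime_hitTimeLE k).measurableSet_gt t)) hδ
          (fun t => integral_stoppedProcess_overshootPotential_add_one_add_le hadapt hint hXk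
            hk'pos hkk' t (hdrift t)) hlow
    _ = _ := by rw [hZ0, integral_div]; ring_nf

/-- Overshoot-aware multiplicative drift, upper bound: let the adapted integrable process take
values in `D ⊆ {0} ∪ (0,∞)`, let `k ∈ D` be the target, `T = inf{t : X_t ≤ k}` and
`k' = inf{x ∈ D : x > k} > 0`. If the process starts at the deterministic value `x0 ≥ k'`,
`T` is a.s. finite, `X_T` is integrable, and `X_t − E[X_{t+1} | F_t] ≥ δ·X_t` before time `T`
for some `δ > 0`, then `E[T] ≤ (1/δ)·(1 − E[X_T]/k' + ln(x0/k'))`. -/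
theorem overshoot_aware_multiplicative_drift_upper
    {Ω : Type*} {m0 : MeasurableSpace Ω} (μ : Measure Ω) [IsProbabilityMeasure μ]
    (ℱ : Filtration ℕ m0) (X : ℕ → Ω → ℝ)
    (hadapt : Adapted ℱ X) (hint : ∀ t, Integrable (X t) μ)
    (D : Set ℝ) (hD : D ⊆ {0} ∪ Set.Ioi (0 : ℝ)) (hXD : ∀ t ω, X t ω ∈ D)
    (k : ℝ) (hk : k ∈ D)
    (k' : ℝ) (hk'def : k' = sInf {x | x ∈ D ∧ k < x}) (hk'pos : 0 < k')
    (x0 : ℝ) (hx0 : k' ≤ x0) (hX0 : ∀ ω, X 0 ω = x0)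
    (hfin : ∀ᵐ ω ∂μ, hitTimeLE X k ω < ⊤)
    (hTint : Integrable (stoppedVal X (hitTimeLE X k)) μ)
    (δ : ℝ) (hδ : 0 < δ)
    (hdrift : ∀ t : ℕ, ∀ᵐ ω ∂μ, (t : ℕ∞) < hitTimeLE X k ω →
      δ * X t ω ≤ X t ω - (μ[X (t + 1)|ℱ t]) ω) :
    ∫⁻ ω, ((hitTimeLE X k ω : ℕ∞) : ENNReal) ∂μ
      ≤ ENNReal.ofReal ((1 / δ) *
          (1 - (∫ ω, stoppedVal X (hitTimeLE X k) ω ∂μ) / k' + Real.log (x0 / k'))) :=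
  overshoot_aware_multiplicative_drift_upper_general μ ℱ X hadapt hint D hXD k k' hk'def hk'pos x0
    hx0 hX0 hfin hTint δ hδ hdrift
end
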